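/- arXiv:1707.08598 — 3 statements merged into one kernel-verified Lean document; each statement's English description precedes it below -/
import Mathlib

section
/- Fix a profile V over C, let w = R_2(V) be the 2-approval winner at V, and let i be a GS-manipulator at V with respect to 2-approval such that w ∈ top_2(v_i). Then top(v_i) ≠ w, and every level-1 strategy v of voter i at V with respect to 2-approval satisfies top(v_i) ∈ top_2(v). -/
open scoped Classical

namespace Paper

variable {C I : Type*}

/-- The set of the `k` highest-ranked candidates in the vote `v`. -/
noncomputable def topk [Fintype C] (k : ℕ) (v : LinearOrder C) : Finset C :=
  Finset.univ.filter fun c => (Finset.univ.filter fun d => v.lt c d).card < k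

/-- The highest-ranked candidate of the vote `v`. -/
noncomputable def top [Fintype C] [Nonempty C] (v : LinearOrder C) : C :=
  @Finset.max' C v Finset.univ Finset.univ_nonempty

/-- The `k`-approval score of candidate `c` in the profile `V`. -/
noncomputable def sck [Fintype C] [Fintype I] (k : ℕ) (V : I → LinearOrder C) (c : C) : ℕ :=
  (Finset.univ.filter fun i => c ∈ topk k (V i)).card

/-- The `k`-approval winner of the profile `V` with tie-breaking order `tb`:
the `tb`-greatest candidate among the candidates with maximal `k`-approval score;
equivalently, the unique candidate beating every other candidate. -/
noncomputable def winner [Fintype C] [Nonempty C] [Fintype I] (k : ℕ) (tb : LinearOrder C)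
    (V : I → LinearOrder C) : C :=
  @Finset.max' C tb (Finset.univ.filter fun x => ∀ y, sck k V y ≤ sck k V x)
    (by
      obtain ⟨b, -, hb⟩ := Finset.exists_max_image Finset.univ (sck k V)
        ⟨Classical.arbitrary C, Finset.mem_univ _⟩
      exact ⟨b, Finset.mem_filter.mpr ⟨Finset.mem_univ _, fun y => hb y (Finset.mem_univ y)⟩⟩)

/-- `v'` is a manipulative vote of voter `i` at the profile `V`. -/
def manip [Fintype C] [Nonempty C] [Fintype I] [DecidableEq I] (k : ℕ) (tb : LinearOrder C)
    (V : I → LinearOrder C) (i : I) (v' : LinearOrder C) : Prop :=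
  (V i).lt (winner k tb V) (winner k tb (Function.update V i v'))

/-- `v'` is a level-1 strategy of voter `i` at the profile `V`: the outcome it produces is
strictly preferred (w.r.t. `i`'s sincere vote) to every other feasible outcome. -/
def level1 [Fintype C] [Nonempty C] [Fintype I] [DecidableEq I] (k : ℕ) (tb : LinearOrder C)
    (V : I → LinearOrder C) (i : I) (v' : LinearOrder C) : Prop :=
  ∀ u : LinearOrder C,
    winner k tb (Function.update V i u) ≠ winner k tb (Function.update V i v') →
    (V i).lt (winner k tb (Function.update V i u)) (winner k tb (Function.update V i v'))

/-- `v` is a minimal manipulative vote of voter `i` at `V`. -/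
def minimalManip [Fintype C] [Nonempty C] [Fintype I] [DecidableEq I] (k : ℕ)
    (tb : LinearOrder C) (V : I → LinearOrder C) (i : I) (v : LinearOrder C) : Prop :=
  manip k tb V i v ∧ ∀ v', manip k tb V i v' →
    ((topk k (V i)) \ (topk k v)).card ≤ ((topk k (V i)) \ (topk k v')).card


/-- Off-score: the `k`-approval score of `c` among voters other than `i`. -/
noncomputable def sckOff [Fintype C] [Fintype I] [DecidableEq I] (k : ℕ)
    (V : I → LinearOrder C) (i : I) (c : C) : ℕ :=
  ((Finset.univ.erase i).filter fun j => c ∈ topk k (V j)).card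

lemma sck_eq_off [Fintype C] [Fintype I] [DecidableEq I] (k : ℕ) (V : I → LinearOrder C)
    (i : I) (c : C) :
    sck k V c = sckOff k V i c + (if c ∈ topk k (V i) then 1 else 0) := by
  unfold sck sckOff
  conv_lhs => rw [← Finset.insert_erase (Finset.mem_univ i), Finset.filter_insert]
  split_ifs with h
  · rw [Finset.card_insert_of_notMem (by simp)]
  · simp

lemma sck_update [Fintype C] [Fintype I] [DecidableEq I] (k : ℕ) (V : I → LinearOrder C)
    (i : I) (v : LinearOrder C) (c : C) :
    sck k (Function.update V i v) c = sckOff k V i c + (if c ∈ topk k v then 1 else 0) := by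
  rw [sck_eq_off k (Function.update V i v) i c, Function.update_self]
  have h : sckOff k (Function.update V i v) i c = sckOff k V i c := by
    unfold sckOff
    congr 1
    ext j
    simp only [Finset.mem_filter]
    refine and_congr_right fun hj => ?_
    rw [Function.update_of_ne (Finset.ne_of_mem_erase hj)]
  rw [h]
  split_ifs <;> rfl

lemma top_mem_topk [Fintype C] [Nonempty C] (v : LinearOrder C) {k : ℕ} (hk : 0 < k) :
    top v ∈ topk k v := by
  unfold topk top
  simp only [Finset.mem_filter, Finset.mem_univ, true_and]
  rw [Finset.filter_false_of_mem (fun d _ => by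
    letI := v
    exact not_lt_of_ge (Finset.le_max' Finset.univ d (Finset.mem_univ d))),
    Finset.card_empty]
  exact hk

lemma topk2_unique [Fintype C] (v : LinearOrder C) {w a x : C}
    (hw : w ∈ topk 2 v) (ha : v.lt w a) (hx : v.lt w x) : x = a := by
  by_contra hxa
  unfold topk at hw
  simp only [Finset.mem_filter, Finset.mem_univ, true_and] at hw
  have hsub : ({a, x} : Finset C) ⊆ Finset.univ.filter (fun d => v.lt w d) := by
    intro y hy
    simp only [Finset.mem_insert, Finset.mem_singleton] at hy
    rcases hy with rfl | rfl
    · exact Finset.mem_filter.mpr ⟨Finset.mem_univ _, ha⟩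
    · exact Finset.mem_filter.mpr ⟨Finset.mem_univ _, hx⟩
  have h2 : 2 ≤ (Finset.univ.filter fun d => v.lt w d).card := by
    have := Finset.card_le_card hsub
    rwa [Finset.card_pair (Ne.symm hxa)] at this
  omega

lemma winner_mem [Fintype C] [Nonempty C] [Fintype I] (k : ℕ) (tb : LinearOrder C)
    (V : I → LinearOrder C) :
    winner k tb V ∈ (Finset.univ.filter fun x => ∀ y, sck k V y ≤ sck k V x) := by
  unfold winner
  exact Finset.max'_mem _ _

lemma winner_max [Fintype C] [Nonempty C] [Fintype I] (k : ℕ) (tb : LinearOrder C)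
    (V : I → LinearOrder C) :
    ∀ y, sck k V y ≤ sck k V (winner k tb V) :=
  (Finset.mem_filter.mp (winner_mem k tb V)).2

lemma winner_ge [Fintype C] [Nonempty C] [Fintype I] (k : ℕ) (tb : LinearOrder C)
    (V : I → LinearOrder C) (x : C) (hx : ∀ y, sck k V y ≤ sck k V x) :
    tb.le x (winner k tb V) := by
  unfold winner
  exact Finset.le_max' _ x (Finset.mem_filter.mpr ⟨Finset.mem_univ _, hx⟩)

/-- (a GS-manipulator under 2-approval who ranks the current winner in his
top two positions does not rank the winner first, and keeps his own top candidate in the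
top two positions of every level-1 strategy). -/
theorem statement_5 {C I : Type*} [Fintype C] [Nonempty C] [Fintype I] [DecidableEq I]
    (tb : LinearOrder C) (V : I → LinearOrder C) (i : I)
    (hGS : ∃ v', manip 2 tb V i v')
    (hw : winner 2 tb V ∈ topk 2 (V i)) :
    top (V i) ≠ winner 2 tb V ∧
    ∀ v : LinearOrder C, level1 2 tb V i v → top (V i) ∈ topk 2 v := by
  obtain ⟨v', hv'⟩ := hGS
  have hletop : ∀ c, (V i).le c (top (V i)) := by
    intro c
    unfold top
    exact @Finset.le_max' C (V i) Finset.univ c (Finset.mem_univ c)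
  have hne : top (V i) ≠ winner 2 tb V := by
    intro h
    have h1 : (V i).le (winner 2 tb (Function.update V i v')) (winner 2 tb V) :=
      h ▸ hletop _
    exact absurd h1 (by letI := V i; exact not_le_of_gt hv')
  refine ⟨hne, ?_⟩
  set w := winner 2 tb V with hwdef
  set a := top (V i) with hadef
  have hwa : (V i).lt w a := by
    letI := V i
    exact lt_of_le_of_ne (hletop w) (fun h => hne h.symm)
  have hwin_max := winner_max 2 tb V
  rw [← hwdef] at hwin_max
  have honly : ∀ x, (V i).lt w x → x = a := fun x hx => topk2_unique (V i) hw hwa hx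
  intro v hv
  have hwv' : (V i).lt w (winner 2 tb (Function.update V i v')) := hv'
  have hwa' : winner 2 tb (Function.update V i v) = a := by
    by_cases hcase : winner 2 tb (Function.update V i v') = winner 2 tb (Function.update V i v)
    · exact honly _ (hcase ▸ hwv')
    · have hlt := hv v' hcase
      exact honly _ (by letI := V i; exact lt_trans hwv' hlt)
  by_contra ha
  have haVi : a ∈ topk 2 (V i) := top_mem_topk (V i) (by norm_num)
  have hsa : sck 2 V a = sckOff 2 V i a + 1 := by
    rw [sck_eq_off 2 V i a, if_pos haVi]
  have hsw : sck 2 V w = sckOff 2 V i w + 1 := by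
    rw [sck_eq_off 2 V i w, if_pos hw]
  have hsa' : sck 2 (Function.update V i v) a = sckOff 2 V i a := by
    rw [sck_update 2 V i v a, if_neg ha]
    omega
  have hsw' : sckOff 2 V i w ≤ sck 2 (Function.update V i v) w := by
    rw [sck_update 2 V i v w]
    omega
  have hwin'_max := winner_max 2 tb (Function.update V i v)
  rw [hwa'] at hwin'_max
  have h1 : sckOff 2 V i w ≤ sckOff 2 V i a := by
    have := hwin'_max w
    omega
  have h2 : sckOff 2 V i a ≤ sckOff 2 V i w := by
    have := hwin_max a
    omega
  have haw_tb : tb.le a w := by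
    apply winner_ge 2 tb V a
    intro y
    have := hwin_max y
    omega
  have hwa_tb : tb.le w a := by
    have := winner_ge 2 tb (Function.update V i v) w (fun y => by
      have h3 := hwin'_max y
      omega)
    rwa [hwa'] at this
  exact hne (@le_antisymm C tb.toPartialOrder a w haw_tb hwa_tb)

end Paper
end

section
/- Fix a profile V over C, let w = R_2(V) be the 2-approval winner at V, and let i be a GS-manipulator at V with respect to 2-approval such that w ∉ top_2(v_i); write top_2(v_i) = {a, a'}. Then there exists a candidate c ∈ C\{a, a'} such that every minimal manipulative vote v of voter i at V that is also a level-1 strategy of voter i at V satisfies top_2(v) ∈ {{a, c}, {a', c}}. Consequently, every vote in a set consisting of v_i together with a subset of i's minimal manipulative level-1 strategies has top-2 set in {{a, a'}, {a, c}, {a', c}}. -/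
open scoped Classical

namespace Paper

variable {C I : Type*}

section Helpers

lemma LO.trans (tb : LinearOrder C) {a b c : C} : tb.lt a b → tb.lt b c → tb.lt a c := by
  letI := tb; exact fun h1 h2 => lt_trans h1 h2

lemma LO.asymm (tb : LinearOrder C) {a b : C} : tb.lt a b → tb.lt b a → False := by
  letI := tb; exact fun h1 h2 => absurd h2 (lt_asymm h1)

lemma LO.ne (tb : LinearOrder C) {a b : C} : tb.lt a b → a ≠ b := by
  letI := tb; exact fun h1 => ne_of_lt h1

lemma LO.irrefl (tb : LinearOrder C) {a : C} : ¬ tb.lt a a := fun h => LO.ne tb h rfl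

lemma LO.lt_of_le_of_ne (tb : LinearOrder C) {a b : C} : tb.le a b → a ≠ b → tb.lt a b := by
  letI := tb; exact fun h n => h.lt_of_ne n

lemma LO.not_lt_of_le (tb : LinearOrder C) {a b : C} : tb.le a b → tb.lt b a → False := by
  letI := tb; exact fun h h' => absurd h' (not_lt.mpr h)

lemma LO.trichotomy (tb : LinearOrder C) (a b : C) : tb.lt a b ∨ a = b ∨ tb.lt b a := by
  letI := tb; exact lt_trichotomy a b

/-- Membership characterisation of a two-element finset. -/
lemma pair_mem_char [Fintype C] {s : Finset C} {x y : C} (hxy : x ≠ y) (hcard : s.card = 2)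
    (hx : x ∈ s) (hy : y ∈ s) : ∀ e, e ∈ s ↔ e = x ∨ e = y := by
  classical
  intro e
  constructor
  · intro he
    by_contra hne
    push_neg at hne
    have h3 : ({x, y, e} : Finset C) ⊆ s := by
      intro f hf
      rcases Finset.mem_insert.mp hf with rfl | hf
      · exact hx
      rcases Finset.mem_insert.mp hf with rfl | hf
      · exact hy
      · rw [Finset.mem_singleton.mp hf]; exact he
    have hcard3 : ({x, y, e} : Finset C).card = 3 := by
      rw [Finset.card_insert_of_notMem (by
            simp only [Finset.mem_insert, Finset.mem_singleton]
            push_neg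
            exact ⟨hxy, fun h => hne.1 h.symm⟩),
        Finset.card_insert_of_notMem (by
            simp only [Finset.mem_singleton]
            exact fun h => hne.2 h.symm),
        Finset.card_singleton]
    have := Finset.card_le_card h3
    omega
  · rintro (rfl | rfl)
    · exact hx
    · exact hy

end Helpers

section Beats
variable [Fintype C] [Nonempty C] [Fintype I]

/-- `x` strictly beats `y` when scores are given by `f` and ties are broken by `tb`. -/
def beats (tb : LinearOrder C) (f : C → ℕ) (x y : C) : Prop :=
  f y < f x ∨ (f y = f x ∧ tb.lt y x)

lemma winner_beats (k : ℕ) (tb : LinearOrder C) (V : I → LinearOrder C) :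
    ∀ y, y ≠ winner k tb V → beats tb (sck k V) (winner k tb V) y := by
  intro y hy
  have hmem : winner k tb V ∈ (Finset.univ.filter fun x => ∀ z, sck k V z ≤ sck k V x) := by
    unfold winner; exact @Finset.max'_mem C tb _ _
  have hmax : ∀ z, sck k V z ≤ sck k V (winner k tb V) := (Finset.mem_filter.mp hmem).2
  rcases lt_or_eq_of_le (hmax y) with h | h
  · exact Or.inl h
  · refine Or.inr ⟨h, ?_⟩
    have hymem : y ∈ (Finset.univ.filter fun x => ∀ z, sck k V z ≤ sck k V x) :=
      Finset.mem_filter.mpr ⟨Finset.mem_univ _, fun z => (hmax z).trans_eq h.symm⟩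
    have hle : tb.le y (winner k tb V) := by
      unfold winner; exact @Finset.le_max' C tb _ y hymem
    exact LO.lt_of_le_of_ne tb hle hy

lemma winner_eq (k : ℕ) (tb : LinearOrder C) (V : I → LinearOrder C) {x : C}
    (h : ∀ y, y ≠ x → beats tb (sck k V) x y) : winner k tb V = x := by
  by_contra hne
  have h1 := winner_beats k tb V x (fun e => hne e.symm)
  have h2 := h _ hne
  rcases h1 with h1 | ⟨e1, l1⟩ <;> rcases h2 with h2 | ⟨e2, l2⟩
  · omega
  · omega
  · omega
  · exact LO.asymm tb l1 l2

end Beats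

section Score
variable [Fintype C] [Fintype I] [DecidableEq I]

/-- The score of `c` coming from all voters other than `i`. -/
noncomputable def restScore (k : ℕ) (V : I → LinearOrder C) (i : I) (c : C) : ℕ :=
  ((Finset.univ.erase i).filter fun j => c ∈ topk k (V j)).card

lemma sck_update_mem {k : ℕ} {V : I → LinearOrder C} {i : I} {u : LinearOrder C} {c : C}
    (hcu : c ∈ topk k u) :
    sck k (Function.update V i u) c = restScore k V i c + 1 := by
  have hins : restScore k V i c + 1
      = (insert i ((Finset.univ.erase i).filter fun j => c ∈ topk k (V j))).card := by
    rw [Finset.card_insert_of_notMem (by simp), restScore]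
    congr 2
    ext j
    simp
  rw [hins]
  unfold sck
  congr 1
  ext j
  rcases eq_or_ne j i with rfl | hj
  · simp [hcu]
  · simp [Function.update_of_ne hj, hj]

lemma sck_update_not_mem {k : ℕ} {V : I → LinearOrder C} {i : I} {u : LinearOrder C} {c : C}
    (hcu : c ∉ topk k u) :
    sck k (Function.update V i u) c = restScore k V i c := by
  unfold sck restScore
  congr 1
  ext j
  rcases eq_or_ne j i with rfl | hj
  · simp [hcu]
  · simp [Function.update_of_ne hj, hj]

lemma sck_eq_mem {k : ℕ} {V : I → LinearOrder C} {i : I} {c : C} (h : c ∈ topk k (V i)) :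
    sck k V c = restScore k V i c + 1 := by
  conv_lhs => rw [← Function.update_eq_self i V]
  exact sck_update_mem h

lemma sck_eq_not_mem {k : ℕ} {V : I → LinearOrder C} {i : I} {c : C} (h : c ∉ topk k (V i)) :
    sck k V c = restScore k V i c := by
  conv_lhs => rw [← Function.update_eq_self i V]
  exact sck_update_not_mem h

end Score

section TopkCard
variable [Fintype C]

/-- The set of candidates ranked above `c` in the vote `v`. -/
noncomputable def aboveSet (v : LinearOrder C) (c : C) : Finset C :=
  Finset.univ.filter fun d => v.lt c d

lemma mem_aboveSet {v : LinearOrder C} {c d : C} : d ∈ aboveSet v c ↔ v.lt c d := by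
  simp [aboveSet]

lemma mem_topk {k : ℕ} {v : LinearOrder C} {c : C} :
    c ∈ topk k v ↔ (aboveSet v c).card < k := by
  unfold topk aboveSet
  simp only [Finset.mem_filter, Finset.mem_univ, true_and, Finset.filter_congr_decidable]

lemma card_topk_le (k : ℕ) (v : LinearOrder C) : (topk k v).card ≤ k := by
  by_contra h
  push_neg at h
  have hne : (topk k v).Nonempty := Finset.card_pos.mp (by omega)
  have hm : @Finset.min' C v _ hne ∈ topk k v := @Finset.min'_mem C v _ hne
  have hsub : (topk k v).erase (@Finset.min' C v _ hne)
      ⊆ aboveSet v (@Finset.min' C v _ hne) := by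
    intro d hd
    obtain ⟨hdm, hdt⟩ := Finset.mem_erase.mp hd
    refine mem_aboveSet.mpr ?_
    have hle : v.le (@Finset.min' C v _ hne) d := @Finset.min'_le C v _ d hdt
    exact LO.lt_of_le_of_ne v hle hdm.symm
  have h1 := Finset.card_le_card hsub
  have h2 : ((topk k v).erase (@Finset.min' C v _ hne)).card = (topk k v).card - 1 :=
    Finset.card_erase_of_mem hm
  have h3 := mem_topk.mp hm
  omega

lemma card_topk_ge (k : ℕ) (v : LinearOrder C) (hk : k ≤ Fintype.card C) :
    k ≤ (topk k v).card := by
  by_contra h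
  push_neg at h
  have hne : (Finset.univ \ topk k v).Nonempty := by
    apply Finset.card_pos.mp
    rw [Finset.card_sdiff_of_subset (Finset.subset_univ _), Finset.card_univ]
    omega
  have hm : @Finset.max' C v _ hne ∈ Finset.univ \ topk k v := @Finset.max'_mem C v _ hne
  have hmt : @Finset.max' C v _ hne ∉ topk k v := (Finset.mem_sdiff.mp hm).2
  have hge : k ≤ (aboveSet v (@Finset.max' C v _ hne)).card := by
    by_contra hlt
    exact hmt (mem_topk.mpr (by omega))
  have hsub : aboveSet v (@Finset.max' C v _ hne) ⊆ topk k v := by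
    intro d hd
    have hlt : v.lt (@Finset.max' C v _ hne) d := mem_aboveSet.mp hd
    by_contra hdt
    have hdm : d ∈ Finset.univ \ topk k v := Finset.mem_sdiff.mpr ⟨Finset.mem_univ _, hdt⟩
    have hle : v.le d (@Finset.max' C v _ hne) := @Finset.le_max' C v _ d hdm
    exact LO.not_lt_of_le v hle hlt
  have := Finset.card_le_card hsub
  omega

end TopkCard

section PushTop
variable [Fintype C]

/-- rank of `c` in the order `tb`. -/
noncomputable def rk (tb : LinearOrder C) (c : C) : ℕ :=
  (Finset.univ.filter fun d => tb.lt d c).card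

lemma rk_lt_of_lt (tb : LinearOrder C) {c d : C} (h : tb.lt c d) : rk tb c < rk tb d := by
  apply Finset.card_lt_card
  constructor
  · intro e he
    simp only [Finset.mem_filter, Finset.mem_univ, true_and] at he ⊢
    exact LO.trans tb he h
  · intro hsub
    have hc : c ∈ Finset.univ.filter fun e => tb.lt e d :=
      Finset.mem_filter.mpr ⟨Finset.mem_univ _, h⟩
    have := (Finset.mem_filter.mp (hsub hc)).2
    exact LO.irrefl tb this

lemma rk_lt_card (tb : LinearOrder C) (c : C) : rk tb c < Fintype.card C := by
  have hsub : (Finset.univ.filter fun d => tb.lt d c) ⊆ Finset.univ.erase c := by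
    intro d hd
    exact Finset.mem_erase.mpr ⟨LO.ne tb (Finset.mem_filter.mp hd).2, Finset.mem_univ _⟩
  have h1 := Finset.card_le_card hsub
  have h2 : (Finset.univ.erase c).card = Fintype.card C - 1 := by
    rw [Finset.card_erase_of_mem (Finset.mem_univ _), Finset.card_univ]
  have h3 : 0 < Fintype.card C := Fintype.card_pos_iff.mpr ⟨c⟩
  rw [rk]
  omega

/-- The key used to build a vote whose top-`k` set is `S`. -/
noncomputable def pushKey (tb : LinearOrder C) (S : Finset C) (c : C) : ℕ :=
  (if c ∈ S then Fintype.card C else 0) + rk tb c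

lemma pushKey_injective (tb : LinearOrder C) (S : Finset C) :
    Function.Injective (pushKey tb S) := by
  have key : ∀ c d : C, tb.lt c d → pushKey tb S c ≠ pushKey tb S d := by
    intro c d h
    have h1 := rk_lt_of_lt tb h
    have h2 := rk_lt_card tb c
    have h3 := rk_lt_card tb d
    by_cases hc : c ∈ S <;> by_cases hd : d ∈ S <;>
      simp only [pushKey, hc, hd, if_true, if_false] <;> omega
  intro c d h
  rcases LO.trichotomy tb c d with hlt | he | hlt
  · exact absurd h (key c d hlt)
  · exact he
  · exact absurd h.symm (key d c hlt)

/-- A vote that ranks the candidates of `S` above everyone else. -/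
noncomputable def pushTop (tb : LinearOrder C) (S : Finset C) : LinearOrder C :=
  LinearOrder.lift' (pushKey tb S) (pushKey_injective tb S)

lemma pushTop_lt {tb : LinearOrder C} {S : Finset C} {c d : C} :
    (pushTop tb S).lt c d ↔ pushKey tb S c < pushKey tb S d := Iff.rfl

lemma topk_pushTop (tb : LinearOrder C) (S : Finset C) {k : ℕ} (hS : S.card = k) :
    topk k (pushTop tb S) = S := by
  ext c
  rw [mem_topk]
  constructor
  · intro h
    by_contra hc
    have hsub : S ⊆ aboveSet (pushTop tb S) c := by
      intro d hd
      refine mem_aboveSet.mpr ?_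
      rw [pushTop_lt]
      simp only [pushKey, if_neg hc, if_pos hd]
      have := rk_lt_card tb c
      omega
    have := Finset.card_le_card hsub
    omega
  · intro hc
    have hsub : aboveSet (pushTop tb S) c ⊆ S.erase c := by
      intro d hd
      have hlt : (pushTop tb S).lt c d := mem_aboveSet.mp hd
      rw [pushTop_lt] at hlt
      by_cases hdS : d ∈ S
      · refine Finset.mem_erase.mpr ⟨?_, hdS⟩
        rintro rfl
        omega
      · exfalso
        simp only [pushKey, if_pos hc, if_neg hdS] at hlt
        have := rk_lt_card tb d
        omega
    have h1 := Finset.card_le_card hsub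
    have h2 : (S.erase c).card < S.card := Finset.card_erase_lt_of_mem hc
    omega

end PushTop

section Main
variable [Fintype C] [Nonempty C] [Fintype I] [DecidableEq I]

/-- The winner produced by a manipulative vote of a promoter is ranked among
the top `k` of the manipulative vote and is not among the sincere top `k`. -/
lemma manip_winner (k : ℕ) (tb : LinearOrder C) (V : I → LinearOrder C) (i : I)
    (hw : winner k tb V ∉ topk k (V i)) {v' : LinearOrder C} (hm : manip k tb V i v') :
    winner k tb (Function.update V i v') ∈ topk k v' ∧
      winner k tb (Function.update V i v') ∉ topk k (V i) := by
  have hne : winner k tb (Function.update V i v') ≠ winner k tb V := (LO.ne (V i) hm).symm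
  have h1 : beats tb (sck k (Function.update V i v'))
      (winner k tb (Function.update V i v')) (winner k tb V) :=
    winner_beats k tb (Function.update V i v') _ hne.symm
  have h2 : beats tb (sck k V) (winner k tb V) (winner k tb (Function.update V i v')) :=
    winner_beats k tb V _ hne
  unfold beats at h1 h2
  rw [sck_eq_not_mem hw] at h2
  have hA : winner k tb (Function.update V i v') ∉ topk k (V i) := by
    intro hA
    rw [sck_eq_mem hA] at h2
    by_cases hB : winner k tb (Function.update V i v') ∈ topk k v' <;>
      by_cases hD : winner k tb V ∈ topk k v'
    · rw [sck_update_mem hB, sck_update_mem hD] at h1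
      rcases h1 with h1 | ⟨e1, l1⟩ <;> rcases h2 with h2 | ⟨e2, l2⟩ <;> omega
    · rw [sck_update_mem hB, sck_update_not_mem hD] at h1
      rcases h1 with h1 | ⟨e1, l1⟩ <;> rcases h2 with h2 | ⟨e2, l2⟩ <;>
        first | omega | exact LO.asymm tb l1 l2
    · rw [sck_update_not_mem hB, sck_update_mem hD] at h1
      rcases h1 with h1 | ⟨e1, l1⟩ <;> rcases h2 with h2 | ⟨e2, l2⟩ <;> omega
    · rw [sck_update_not_mem hB, sck_update_not_mem hD] at h1
      rcases h1 with h1 | ⟨e1, l1⟩ <;> rcases h2 with h2 | ⟨e2, l2⟩ <;> omega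
  refine ⟨?_, hA⟩
  by_contra hB
  rw [sck_eq_not_mem hA] at h2
  rw [sck_update_not_mem hB] at h1
  by_cases hD : winner k tb V ∈ topk k v'
  · rw [sck_update_mem hD] at h1
    rcases h1 with h1 | ⟨e1, l1⟩ <;> rcases h2 with h2 | ⟨e2, l2⟩ <;>
      first | omega | exact LO.asymm tb l1 l2
  · rw [sck_update_not_mem hD] at h1
    rcases h1 with h1 | ⟨e1, l1⟩ <;> rcases h2 with h2 | ⟨e2, l2⟩ <;>
      first | omega | exact LO.asymm tb l1 l2

/-- Replacing a manipulative vote by a vote approving exactly `x` (a sincerely approved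
candidate) and the current manipulated winner keeps the same winner. -/
lemma improve (tb : LinearOrder C) (V : I → LinearOrder C) (i : I)
    (hw : winner 2 tb V ∉ topk 2 (V i)) {v' : LinearOrder C} (hm : manip 2 tb V i v')
    {x : C} (hx : x ∈ topk 2 (V i)) {S : Finset C}
    (hT : topk 2 (pushTop tb S) = S)
    (hxS : x ∈ S) (hcS : winner 2 tb (Function.update V i v') ∈ S)
    (honly : ∀ e ∈ S, e = x ∨ e = winner 2 tb (Function.update V i v')) :
    winner 2 tb (Function.update V i (pushTop tb S))
      = winner 2 tb (Function.update V i v') := by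
  obtain ⟨hct, hcs⟩ := manip_winner 2 tb V i hw hm
  apply winner_eq
  intro y hy
  have WneC : winner 2 tb V ≠ winner 2 tb (Function.update V i v') := LO.ne (V i) hm
  have gc : sck 2 (Function.update V i (pushTop tb S)) (winner 2 tb (Function.update V i v'))
      = restScore 2 V i (winner 2 tb (Function.update V i v')) + 1 :=
    sck_update_mem (by rw [hT]; exact hcS)
  have vc : sck 2 (Function.update V i v') (winner 2 tb (Function.update V i v'))
      = restScore 2 V i (winner 2 tb (Function.update V i v')) + 1 := sck_update_mem hct
  by_cases hyx : y = x
  · have hy' : y ∈ topk 2 (V i) := by rw [hyx]; exact hx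
    have gx : sck 2 (Function.update V i (pushTop tb S)) y = restScore 2 V i y + 1 :=
      sck_update_mem (by rw [hT, hyx]; exact hxS)
    have h2 : beats tb (sck 2 V) (winner 2 tb V) y :=
      winner_beats 2 tb V y (fun h => hw (by rw [← h]; exact hy'))
    have h1 : beats tb (sck 2 (Function.update V i v'))
        (winner 2 tb (Function.update V i v')) (winner 2 tb V) :=
      winner_beats 2 tb (Function.update V i v') _ WneC
    unfold beats at h1 h2 ⊢
    rw [sck_eq_not_mem hw, sck_eq_mem hy'] at h2
    rw [vc] at h1
    rw [gx, gc]
    by_cases hD : winner 2 tb V ∈ topk 2 v'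
    · rw [sck_update_mem hD] at h1
      rcases h1 with h1 | ⟨e1, l1⟩ <;> rcases h2 with h2 | ⟨e2, l2⟩ <;> left <;> omega
    · rw [sck_update_not_mem hD] at h1
      rcases h1 with h1 | ⟨e1, l1⟩ <;> rcases h2 with h2 | ⟨e2, l2⟩
      · left; omega
      · left; omega
      · left; omega
      · right; exact ⟨by omega, LO.trans tb l2 l1⟩
  · have hyS : y ∉ S := by
      intro hyS
      rcases honly y hyS with h | h
      · exact hyx h
      · exact hy h
    have gy : sck 2 (Function.update V i (pushTop tb S)) y = restScore 2 V i y :=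
      sck_update_not_mem (by rw [hT]; exact hyS)
    have h1 : beats tb (sck 2 (Function.update V i v'))
        (winner 2 tb (Function.update V i v')) y :=
      winner_beats 2 tb (Function.update V i v') y hy
    unfold beats at h1 ⊢
    rw [vc] at h1
    rw [gy, gc]
    by_cases hD : y ∈ topk 2 v'
    · rw [sck_update_mem hD] at h1
      rcases h1 with h1 | ⟨e1, l1⟩
      · left; omega
      · left; omega
    · rw [sck_update_not_mem hD] at h1
      rcases h1 with h1 | ⟨e1, l1⟩
      · left; omega
      · right; exact ⟨by omega, l1⟩

/-- Core of Statement 7. -/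
theorem statement_7_core (tb : LinearOrder C) (V : I → LinearOrder C) (i : I)
    (hw : winner 2 tb V ∉ topk 2 (V i))
    (a a' : C) (haa : a ≠ a') (htopP : ∀ e, e ∈ topk 2 (V i) ↔ e = a ∨ e = a') :
    ∀ v, minimalManip 2 tb V i v →
      ((∀ e, e ∈ topk 2 v ↔ e = a ∨ e = winner 2 tb (Function.update V i v)) ∨
       (∀ e, e ∈ topk 2 v ↔ e = a' ∨ e = winner 2 tb (Function.update V i v))) := by
  have hcard2 : 2 ≤ Fintype.card C := Fintype.one_lt_card_iff.mpr ⟨a, a', haa⟩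
  have hcardtop : ∀ v : LinearOrder C, (topk 2 v).card = 2 :=
    fun v => le_antisymm (card_topk_le 2 v) (card_topk_ge 2 v hcard2)
  have ha_top : a ∈ topk 2 (V i) := (htopP a).mpr (Or.inl rfl)
  have ha'_top : a' ∈ topk 2 (V i) := (htopP a').mpr (Or.inr rfl)
  intro v hv
  obtain ⟨hman, hmin⟩ := hv
  obtain ⟨hct, hcs⟩ := manip_winner 2 tb V i hw hman
  generalize hgen : winner 2 tb (Function.update V i v) = c' at hct hcs ⊢
  have hcP : ¬(c' = a ∨ c' = a') := fun h => hcs ((htopP _).mpr h)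
  have hc'a : c' ≠ a := fun h => hcP (Or.inl h)
  have hc'a' : c' ≠ a' := fun h => hcP (Or.inr h)
  obtain ⟨S, hSmem⟩ : ∃ S : Finset C, ∀ e, e ∈ S ↔ e = a ∨ e = c' :=
    ⟨{a, c'}, fun e => by simp⟩
  have hScard : S.card = 2 := by
    rw [show S = {a, c'} from by ext e; rw [hSmem e]; simp]
    exact Finset.card_pair (Ne.symm hc'a)
  have hT : topk 2 (pushTop tb S) = S := topk_pushTop tb S hScard
  have himp := improve tb V i hw hman ha_top hT ((hSmem a).mpr (Or.inl rfl))
    (by rw [hgen]; exact (hSmem c').mpr (Or.inr rfl))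
    (fun e he => by rw [hgen]; exact (hSmem e).mp he)
  rw [hgen] at himp
  have hmanu : manip 2 tb V i (pushTop tb S) := by
    unfold manip
    rw [himp, ← hgen]
    exact hman
  have hbound := hmin _ hmanu
  by_cases hA : a ∈ topk 2 v
  · exact Or.inl (pair_mem_char (Ne.symm hc'a) (hcardtop v) hA hct)
  · have hA' : a' ∈ topk 2 v := by
      by_contra hA'
      apply absurd hbound
      apply not_le.mpr
      refine lt_of_le_of_lt
        (le_trans (Finset.card_le_card (t := ({a'} : Finset C)) ?_)
          (le_of_eq (Finset.card_singleton a')))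
        (Finset.one_lt_card.mpr
          ⟨a, Finset.mem_sdiff.mpr ⟨ha_top, hA⟩,
           a', Finset.mem_sdiff.mpr ⟨ha'_top, hA'⟩, haa⟩)
      intro e he
      rw [Finset.mem_sdiff] at he
      obtain ⟨h1, h2⟩ := he
      rw [Finset.mem_singleton]
      rcases (htopP e).mp h1 with rfl | rfl
      · exact absurd (by rw [hT]; exact (hSmem e).mpr (Or.inl rfl)) h2
      · rfl
    exact Or.inr (pair_mem_char (Ne.symm hc'a') (hcardtop v) hA' hct)

end Main

/-- minimal manipulative level-1 strategies of a promoter under 2-approval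
promote one fixed candidate `c`. -/
theorem statement_7 {C I : Type*} [Fintype C] [Nonempty C] [DecidableEq C]
    [Fintype I] [DecidableEq I]
    (tb : LinearOrder C) (V : I → LinearOrder C) (i : I)
    (hGS : ∃ v', manip 2 tb V i v')
    (hw : winner 2 tb V ∉ topk 2 (V i))
    (a a' : C) (haa : a ≠ a') (htop : topk 2 (V i) = {a, a'}) :
    ∃ c : C, c ∉ ({a, a'} : Finset C) ∧
      (∀ v : LinearOrder C, minimalManip 2 tb V i v → level1 2 tb V i v →
        topk 2 v = {a, c} ∨ topk 2 v = {a', c}) ∧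
      (∀ v : LinearOrder C,
        (v = V i ∨ (minimalManip 2 tb V i v ∧ level1 2 tb V i v)) →
        topk 2 v = {a, a'} ∨ topk 2 v = {a, c} ∨ topk 2 v = {a', c}) := by
  classical
  have htopP : ∀ e, e ∈ topk 2 (V i) ↔ e = a ∨ e = a' := fun e => by rw [htop]; simp
  have struct := statement_7_core tb V i hw a a' haa htopP
  by_cases hex : ∃ v, minimalManip 2 tb V i v ∧ level1 2 tb V i v
  · obtain ⟨v0, hv0m, hv0l⟩ := hex
    have hmain : ∀ v : LinearOrder C, minimalManip 2 tb V i v → level1 2 tb V i v →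
        topk 2 v = {a, winner 2 tb (Function.update V i v0)} ∨
        topk 2 v = {a', winner 2 tb (Function.update V i v0)} := by
      intro v hm hl
      have heq : winner 2 tb (Function.update V i v)
          = winner 2 tb (Function.update V i v0) := by
        by_contra hne
        exact LO.asymm (V i) (hv0l v hne) (hl v0 (fun h => hne h.symm))
      rcases struct v hm with h | h
      · left
        ext e
        rw [h e, heq]
        simp
      · right
        ext e
        rw [h e, heq]
        simp
    refine ⟨winner 2 tb (Function.update V i v0), ?_, hmain, ?_⟩
    · simp only [Finset.mem_insert, Finset.mem_singleton]
      intro h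
      exact (manip_winner 2 tb V i hw hv0m.1).2 ((htopP _).mpr h)
    · intro v hv
      rcases hv with rfl | ⟨hm, hl⟩
      · left; exact htop
      · rcases hmain v hm hl with h | h
        · right; left; exact h
        · right; right; exact h
  · refine ⟨winner 2 tb V, ?_, ?_, ?_⟩
    · simp only [Finset.mem_insert, Finset.mem_singleton]
      intro h
      exact hw ((htopP _).mpr h)
    · intro v hm hl
      exact absurd ⟨v, hm, hl⟩ hex
    · intro v hv
      rcases hv with rfl | ⟨hm, hl⟩
      · left; exact htop
      · exact absurd ⟨v, hm, hl⟩ hex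

end Paper
end

section
/- In the GS-game constructed from the X3C instance (Γ⁰, Σ⁰) as described (4-approval, tie-breaking w > c > p > c_1 > … > c_{3ν} > dummies): if (Γ⁰, Σ⁰) has an exact cover, then z''_0 is a level-2 strategy of voter 0 (no linear order on C weakly dominates z''_0), and z'_0 is not an improving strategy (z'_0 does not weakly dominate z_0). -/
open scoped Classical

namespace Paper

section Voting

variable {C I : Type*}

/-- The vote `v` ranks the candidates according to the listed blocks: every candidate occurs
in some block, and every candidate of an earlier block is ranked above every candidate of a
later block (the internal order of each block being arbitrary). -/
def FollowsBlocks [Fintype C] (v : LinearOrder C) (L : List (Finset C)) : Prop :=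
  (∀ x : C, ∃ B ∈ L, x ∈ B) ∧
  ∀ i j : Fin L.length, (i : ℕ) < (j : ℕ) → ∀ a ∈ L.get i, ∀ b ∈ L.get j, v.lt b a

end Voting

/-- The ground set `Γ` of the modified X3C instance: the three elements `g₁, g₂, g₃` added
first (`Sum.inl`), the `3ν'` elements of the original ground set `Γ⁰`, and the elements
`x_i, y_i, z_i` for `i = 1, …, ν'+2`.  Altogether `3ν` elements, where `ν = 2ν' + 3`. -/
abbrev GElem (ν' : ℕ) := Fin 3 ⊕ (Fin (3 * ν') ⊕ (Fin (ν' + 2) × Fin 3))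

/-- Indices of the sets of the modified collection `Σ`: the `μ₀` original sets, the added set
`{g₁, g₂, g₃}`, the sets `S_i`, and the sets `S'_i`.  Altogether `μ` sets. -/
abbrev SIdx (ν' μ0 : ℕ) := Fin μ0 ⊕ (Unit ⊕ (Fin (ν' + 2) ⊕ Fin (ν' + 2)))

/-- The element `x_i` (for `t = 0`), `y_i` (for `t = 1`) or `z_i` (for `t = 2`). -/
def xel {ν' : ℕ} (i : Fin (ν' + 2)) (t : Fin 3) : GElem ν' := Sum.inr (Sum.inr (i, t))

/-- The sets of the modified collection `Σ`, given the original collection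
`σ0 : Fin μ0 → Finset (Fin (3 * ν'))`. -/
def Gset {ν' μ0 : ℕ} (σ0 : Fin μ0 → Finset (Fin (3 * ν'))) :
    SIdx ν' μ0 → Finset (GElem ν')
  | Sum.inl j => (σ0 j).image fun g => Sum.inr (Sum.inl g)
  | Sum.inr (Sum.inl _) => {Sum.inl 0, Sum.inl 1, Sum.inl 2}
  | Sum.inr (Sum.inr (Sum.inl i)) => {xel i 0, xel i 1, xel i 2}
  | Sum.inr (Sum.inr (Sum.inr i)) => {xel i 1, xel i 2, xel (i + 1) 0}

/-- The candidates: `w`, `c`, `p`, the candidates `c_g` for ground elements `g` (with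
`c_1 = cg (Sum.inl 0)` corresponding to `g₁`), and the dummy candidates: `D_0` (`d none`),
`D_s` for each set index `s` (`d (some s)`), `D_c` (`dc`), `E_j` (`e j`) for `j ∈ [ν+1]`,
and `F_{g,j}` (`f g j`) for `g` a ground element and `j ∈ [ν+1]`; here `ν + 1 = 2ν' + 4`. -/
inductive Cand (ν' μ0 : ℕ) where
  | w : Cand ν' μ0
  | c : Cand ν' μ0
  | p : Cand ν' μ0
  | cg : GElem ν' → Cand ν' μ0
  | d : Option (SIdx ν' μ0) → Fin 4 → Cand ν' μ0
  | dc : Fin 3 → Cand ν' μ0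
  | e : Fin (2 * ν' + 4) → Fin 2 → Cand ν' μ0
  | f : GElem ν' → Fin (2 * ν' + 4) → Fin 3 → Cand ν' μ0
  deriving DecidableEq, Fintype

instance (ν' μ0 : ℕ) : Nonempty (Cand ν' μ0) := ⟨Cand.w⟩

/-- The voters: voter `0` (the level-2 voter), the `μ` GS-manipulators `man s` (voter `z_s`),
the voter `u`, the `ν+1` voters `u_j`, and the voters `u_{g,j}` for each ground element `g`
and `j ∈ [ν+1]`. -/
inductive Voter (ν' μ0 : ℕ) where
  | v0 : Voter ν' μ0
  | man : SIdx ν' μ0 → Voter ν' μ0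
  | u : Voter ν' μ0
  | uj : Fin (2 * ν' + 4) → Voter ν' μ0
  | uij : GElem ν' → Fin (2 * ν' + 4) → Voter ν' μ0
  deriving DecidableEq, Fintype

variable (ν' μ0 : ℕ)

/-- The block of dummy candidates `D_0` (belonging to voter 0). -/
def D0set : Finset (Cand ν' μ0) := Finset.univ.image (Cand.d none)

/-- The block of dummy candidates `D_s` (belonging to the manipulator `s`). -/
def Dset (s : SIdx ν' μ0) : Finset (Cand ν' μ0) := Finset.univ.image (Cand.d (some s))

/-- The set of candidates `C_s = {c_g : g ∈ σ_s}`. -/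
def Cset (σ0 : Fin μ0 → Finset (Fin (3 * ν'))) (s : SIdx ν' μ0) : Finset (Cand ν' μ0) :=
  (Gset σ0 s).image Cand.cg

/-- The block of dummy candidates `D_c`. -/
def Dcset : Finset (Cand ν' μ0) := Finset.univ.image Cand.dc

/-- The block of dummy candidates `E_j`. -/
def Eset (j : Fin (2 * ν' + 4)) : Finset (Cand ν' μ0) := Finset.univ.image (Cand.e j)

/-- The block of dummy candidates `F_{g,j}`. -/
def Fset (g : GElem ν') (j : Fin (2 * ν' + 4)) : Finset (Cand ν' μ0) :=
  Finset.univ.image (Cand.f g j)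

/-- The set `C' = {c_1, …, c_{3ν}}` of all ground-element candidates. -/
def Cpset : Finset (Cand ν' μ0) := Finset.univ.image Cand.cg

variable {ν' μ0}

/-- The profile resulting when voter 0 casts `s0`, each GS-manipulator `man s` casts either
his truthful vote `V (man s)` (if `a s = false`) or his manipulative vote `zp s`
(if `a s = true`), and all other voters vote truthfully. -/
noncomputable def play (V : Voter ν' μ0 → LinearOrder (Cand ν' μ0))
    (zp : SIdx ν' μ0 → LinearOrder (Cand ν' μ0)) (s0 : LinearOrder (Cand ν' μ0))
    (a : SIdx ν' μ0 → Bool) : Voter ν' μ0 → LinearOrder (Cand ν' μ0)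
  | Voter.v0 => s0
  | Voter.man s => if a s then zp s else V (Voter.man s)
  | i => V i

/-- The voter-0 strategy `s` weakly dominates the strategy `s'` in the GS-game: for every
choice of actions of the GS-manipulators the outcome of `s` is ranked by voter 0's sincere
vote at least as high as the outcome of `s'`, and strictly higher for some choice. -/
noncomputable def WD (tb : LinearOrder (Cand ν' μ0))
    (V : Voter ν' μ0 → LinearOrder (Cand ν' μ0))
    (zp : SIdx ν' μ0 → LinearOrder (Cand ν' μ0))
    (s s' : LinearOrder (Cand ν' μ0)) : Prop :=
  (∀ a : SIdx ν' μ0 → Bool,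
    winner 4 tb (play V zp s a) = winner 4 tb (play V zp s' a) ∨
    (V Voter.v0).lt (winner 4 tb (play V zp s' a)) (winner 4 tb (play V zp s a))) ∧
  ∃ a : SIdx ν' μ0 → Bool,
    (V Voter.v0).lt (winner 4 tb (play V zp s' a)) (winner 4 tb (play V zp s a))



/-!
Let the manipulators play `z'_j` exactly for the sets of an exact cover of `Γ`: those of the cover
of `Γ⁰`, `{g₁, g₂, g₃}` and all `S_i`. Without voter 0, the candidates `w`, `p` and `c` then get
`ν + 1` approvals each, every `c_g` gets `ν + 2`, and a dummy gets at most two approvals even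
with voter 0's. So at this action profile voter 0 decides among the main candidates: `z''_0`
elects `p`, `z'_0` elects `c`, and the sincere `z_0` elects `c_1` (tie-breaking among the `c_g`),
which `z_0` prefers to `c`; hence `z'_0` is not improving.

A strategy weakly dominating `z''_0` has to elect `p` at that profile as well, which forces its top
four to contain `p` and none of `w`, `c`, `c_g`. Then it approves the same main candidates as
`z''_0`, and since dummies never win, it elects the same candidate as `z''_0` against every action
of the manipulators, so it is nowhere strictly better.
-/

open Finset

section Voting

variable {C I : Type*} [Fintype C]

lemma topk_eq_of_forall_lt {k : ℕ} {v : LinearOrder C} {U : Finset C} (hU : #U = k)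
    (h : ∀ x ∈ U, ∀ y ∉ U, v.lt y x) : topk k v = U := by
  let _ := v
  ext x
  simp only [topk, mem_filter, mem_univ, true_and]
  constructor
  · intro hx
    by_contra hxU
    have : U ⊆ ({d | x < d} : Finset C) := fun u hu => mem_filter.2 ⟨mem_univ _, h u hu x hxU⟩
    exact (card_le_card this).not_gt (hU ▸ hx)
  · intro hxU
    have : ({d | x < d} : Finset C) ⊆ U.erase x := fun d hd => by
      have hxd : x < d := (mem_filter.1 hd).2
      refine mem_erase.2 ⟨hxd.ne', ?_⟩
      by_contra hdU
      exact (h x hxU d hdU).not_gt hxd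
    have := card_le_card this
    rw [card_erase_of_mem hxU, hU] at this
    have := card_pos.2 ⟨x, hxU⟩
    omega

lemma FollowsBlocks.lt_of_mem_append {v : LinearOrder C} {L₁ L₂ : List (Finset C)}
    (h : FollowsBlocks v (L₁ ++ L₂)) {x y : C} (hx : ∃ B ∈ L₁, x ∈ B) (hy : ∀ B ∈ L₁, y ∉ B) :
    v.lt y x := by
  obtain ⟨B, hB, hxB⟩ := hx
  obtain ⟨i, rfl⟩ := List.get_of_mem hB
  obtain ⟨B', hB', hyB'⟩ := h.1 y
  obtain ⟨j, rfl⟩ := List.get_of_mem hB'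
  have hj : L₁.length ≤ j := by
    by_contra! hj
    refine hy _ ?_ hyB'
    rw [List.get_eq_getElem, List.getElem_append_left hj]
    exact List.getElem_mem hj
  refine h.2 ⟨i, by simp; omega⟩ j (by simp; omega) x ?_ y hyB'
  simpa [List.getElem_append_left i.isLt] using hxB

lemma topk_eq_of_followsBlocks_append {k : ℕ} {v : LinearOrder C} {L₁ L₂ : List (Finset C)}
    (h : FollowsBlocks v (L₁ ++ L₂)) {U : Finset C} (hU : ∀ x, x ∈ U ↔ ∃ B ∈ L₁, x ∈ B)
    (hk : #U = k) : topk k v = U :=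
  topk_eq_of_forall_lt hk fun x hx y hy =>
    h.lt_of_mem_append ((hU x).1 hx) fun B hB hyB => hy ((hU y).2 ⟨B, hB, hyB⟩)

variable [Nonempty C] [Fintype I] {k : ℕ} {tb : LinearOrder C}

lemma sck_le_sck_winner (P : I → LinearOrder C) (y : C) :
    sck k P y ≤ sck k P (winner k tb P) := by
  have h : winner k tb P ∈ ({x | ∀ y, sck k P y ≤ sck k P x} : Finset C) := Finset.max'_mem _ _
  exact (mem_filter.1 h).2 y

lemma le_winner_of_sck_eq {P : I → LinearOrder C} {y : C}
    (h : sck k P y = sck k P (winner k tb P)) : tb.le y (winner k tb P) :=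
  @Finset.le_max' C tb _ y (mem_filter.2 ⟨mem_univ _, fun z => h ▸ sck_le_sck_winner P z⟩)

lemma sck_lt_sck_winner_of_lt {P : I → LinearOrder C} {y : C} (h : tb.lt (winner k tb P) y) :
    sck k P y < sck k P (winner k tb P) := by
  let _ := tb
  refine (sck_le_sck_winner P y).lt_of_ne fun hy => ?_
  exact (le_winner_of_sck_eq hy).not_gt h

lemma winner_eq_of {P : I → LinearOrder C} {x : C} (hmax : ∀ y, sck k P y ≤ sck k P x)
    (htie : ∀ y, sck k P y = sck k P x → tb.le y x) : winner k tb P = x := by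
  let _ := tb
  have hx := sck_le_sck_winner (k := k) (tb := tb) P x
  exact le_antisymm (htie _ (le_antisymm (hmax _) hx))
    (le_winner_of_sck_eq (le_antisymm hx (hmax _)))

lemma winner_eq_of_sck_eqOn {P Q : I → LinearOrder C} (M : Set C)
    (hPQ : ∀ y ∈ M, sck k P y = sck k Q y)
    (hP : ∀ y ∉ M, ∃ x ∈ M, sck k P y < sck k P x)
    (hQ : ∀ y ∉ M, ∃ x ∈ M, sck k Q y < sck k Q x) :
    winner k tb Q = winner k tb P := by
  set x := winner k tb P
  have hxM : x ∈ M := by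
    by_contra hx
    obtain ⟨z, -, hz⟩ := hP x hx
    exact (sck_le_sck_winner P z).not_gt hz
  have hmax : ∀ y, sck k Q y ≤ sck k Q x := fun y => by
    by_cases hy : y ∈ M
    · rw [← hPQ y hy, ← hPQ x hxM]; exact sck_le_sck_winner P y
    · obtain ⟨z, hzM, hz⟩ := hQ y hy
      have := sck_le_sck_winner (k := k) (tb := tb) P z
      rw [hPQ z hzM, hPQ x hxM] at this
      omega
  refine winner_eq_of hmax fun y hy => ?_
  by_cases hyM : y ∈ M
  · exact le_winner_of_sck_eq (by rw [hPQ y hyM, hPQ x hxM, hy])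
  · obtain ⟨z, hzM, hz⟩ := hQ y hyM
    have := hmax z
    omega

end Voting

lemma card_filter_mem_eq_one_of_biUnion_eq_univ {ι α : Type*} [Fintype α] [DecidableEq α]
    {T : Finset ι} {σ : ι → Finset α} (hcov : T.biUnion σ = univ)
    (hcard : ∑ j ∈ T, #(σ j) = Fintype.card α) (x : α) : #{j ∈ T | x ∈ σ j} = 1 := by
  have hpos : ∀ y, 1 ≤ #{j ∈ T | y ∈ σ j} := fun y => by
    obtain ⟨j, hj, hy⟩ := mem_biUnion.1 (hcov ▸ mem_univ y)
    exact card_pos.2 ⟨j, mem_filter.2 ⟨hj, hy⟩⟩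
  have hsum : ∑ y, #{j ∈ T | y ∈ σ j} = ∑ _y : α, 1 := by
    rw [sum_const, card_univ, smul_eq_mul, mul_one, ← hcard]
    simp only [card_filter]
    rw [sum_comm]
    simp
  exact ((sum_eq_sum_iff_of_le fun y _ => hpos y).1 hsum.symm x (mem_univ x)).symm

section Game

lemma card_D0set : #(D0set ν' μ0) = 4 := by
  rw [D0set, card_image_of_injective _ fun _ _ h => by injection h]; simp

lemma card_Dset (s : SIdx ν' μ0) : #(Dset ν' μ0 s) = 4 := by
  rw [Dset, card_image_of_injective _ fun _ _ h => by injection h]; simp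

lemma card_Dcset : #(Dcset ν' μ0) = 3 := by
  rw [Dcset, card_image_of_injective _ fun _ _ h => by injection h]; simp

lemma card_Eset (j : Fin (2 * ν' + 4)) : #(Eset ν' μ0 j) = 2 := by
  rw [Eset, card_image_of_injective _ fun _ _ h => by injection h]; simp

lemma card_Fset (g : GElem ν') (j : Fin (2 * ν' + 4)) : #(Fset ν' μ0 g j) = 3 := by
  rw [Fset, card_image_of_injective _ fun _ _ h => by injection h]; simp

variable {σ0 : Fin μ0 → Finset (Fin (3 * ν'))} {a : SIdx ν' μ0 → Bool} {T : Finset (Cand ν' μ0)}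

def approvals (σ0 : Fin μ0 → Finset (Fin (3 * ν'))) (a : SIdx ν' μ0 → Bool)
    (T : Finset (Cand ν' μ0)) : Voter ν' μ0 → Finset (Cand ν' μ0)
  | .v0 => T
  | .man s => if a s then insert .c (Cset ν' μ0 σ0 s) else Dset ν' μ0 s
  | .u => insert .c (Dcset ν' μ0)
  | .uj j => insert .w (insert .p (Eset ν' μ0 j))
  | .uij g j => insert (.cg g) (Fset ν' μ0 g j)

def approvalScore (σ0 : Fin μ0 → Finset (Fin (3 * ν'))) (a : SIdx ν' μ0 → Bool)
    (T : Finset (Cand ν' μ0)) (y : Cand ν' μ0) : ℕ :=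
  #{i | y ∈ approvals σ0 a T i}

lemma sck_play {V : Voter ν' μ0 → LinearOrder (Cand ν' μ0)}
    {zp : SIdx ν' μ0 → LinearOrder (Cand ν' μ0)}
    (hzman : ∀ s, FollowsBlocks (V (Voter.man s))
      [Dset ν' μ0 s, Cset ν' μ0 σ0 s, {Cand.c},
       Finset.univ \ (Dset ν' μ0 s ∪ Cset ν' μ0 σ0 s ∪ {Cand.c})])
    (hu : FollowsBlocks (V Voter.u)
      [{Cand.c}, Dcset ν' μ0, {Cand.w},
       Finset.univ \ (Dcset ν' μ0 ∪ {Cand.c, Cand.w})])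
    (huj : ∀ j, FollowsBlocks (V (Voter.uj j))
      [{Cand.w}, {Cand.p}, Eset ν' μ0 j,
       Finset.univ \ (Eset ν' μ0 j ∪ {Cand.w, Cand.p})])
    (huij : ∀ g j, FollowsBlocks (V (Voter.uij g j))
      [{Cand.cg g}, Fset ν' μ0 g j, {Cand.w},
       Finset.univ \ (Fset ν' μ0 g j ∪ {Cand.cg g, Cand.w})])
    (hzp : ∀ s, topk 4 (zp s) = Cset ν' μ0 σ0 s ∪ {Cand.c})
    (s0 : LinearOrder (Cand ν' μ0)) (a : SIdx ν' μ0 → Bool) :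
    sck 4 (play V zp s0 a) = approvalScore σ0 a (topk 4 s0) := by
  have htop : ∀ i, topk 4 (play V zp s0 a i) = approvals σ0 a (topk 4 s0) i := by
    intro i
    cases i with
    | v0 => rfl
    | man s =>
      by_cases ha : a s
      · simp [play, approvals, ha, hzp]
      · simp only [play, approvals, ha]
        exact topk_eq_of_followsBlocks_append (L₁ := [_]) (hzman s) (by simp) (card_Dset s)
    | u =>
      simp only [play, approvals]
      refine topk_eq_of_followsBlocks_append (L₁ := [_, _]) hu (by simp) ?_
      rw [card_insert_of_notMem (by simp [Dcset]), card_Dcset]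
    | uj j =>
      simp only [play, approvals]
      refine topk_eq_of_followsBlocks_append (L₁ := [_, _, _]) (huj j) (by simp) ?_
      rw [card_insert_of_notMem (by simp [Eset]), card_insert_of_notMem (by simp [Eset]),
        card_Eset]
    | uij g j =>
      simp only [play, approvals]
      refine topk_eq_of_followsBlocks_append (L₁ := [_, _]) (huij g j) (by simp) ?_
      rw [card_insert_of_notMem (by simp [Fset]), card_Fset]
  funext y
  simp only [sck, approvalScore, htop]

def Voter.equivSum :
    Voter ν' μ0 ≃ Unit ⊕ SIdx ν' μ0 ⊕ Unit ⊕ Fin (2 * ν' + 4) ⊕ GElem ν' × Fin (2 * ν' + 4) where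
  toFun
    | .v0 => .inl ()
    | .man s => .inr (.inl s)
    | .u => .inr (.inr (.inl ()))
    | .uj j => .inr (.inr (.inr (.inl j)))
    | .uij g j => .inr (.inr (.inr (.inr (g, j))))
  invFun
    | .inl () => .v0
    | .inr (.inl s) => .man s
    | .inr (.inr (.inl ())) => .u
    | .inr (.inr (.inr (.inl j))) => .uj j
    | .inr (.inr (.inr (.inr (g, j)))) => .uij g j
  left_inv i := by cases i <;> rfl
  right_inv x := by rcases x with _ | s | _ | j | ⟨g, j⟩ <;> rfl

lemma card_filter_voter (P : Voter ν' μ0 → Prop) [DecidablePred P] :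
    #{i | P i} = (if P .v0 then 1 else 0) + #{s | P (.man s)} + (if P .u then 1 else 0) +
      #{j | P (.uj j)} + ∑ g, #{j | P (.uij g j)} := by
  simp only [card_filter]
  rw [← Voter.equivSum.symm.sum_comp]
  simp only [Fintype.sum_sum_type, Fintype.sum_prod_type, Fintype.sum_unique, Voter.equivSum,
    Equiv.coe_fn_symm_mk, add_assoc]
  rfl

lemma approvalScore_w : approvalScore σ0 a T .w = 2 * ν' + 4 + if .w ∈ T then 1 else 0 := by
  rw [approvalScore, card_filter_voter]
  by_cases h : Cand.w ∈ T <;> simp [h, approvals, mem_ite, Dset, Cset, Dcset, Fset, add_comm]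

lemma approvalScore_p : approvalScore σ0 a T .p = 2 * ν' + 4 + if .p ∈ T then 1 else 0 := by
  rw [approvalScore, card_filter_voter]
  by_cases h : Cand.p ∈ T <;> simp [h, approvals, mem_ite, Dset, Cset, Dcset, Fset, add_comm]

lemma approvalScore_c : approvalScore σ0 a T .c = 1 + #{s | a s} + if .c ∈ T then 1 else 0 := by
  rw [approvalScore, card_filter_voter]
  by_cases h : Cand.c ∈ T <;>
    simp [h, approvals, mem_ite, Dset, Cset, Dcset, Eset, Fset, add_comm]

lemma approvalScore_cg (g : GElem ν') :
    approvalScore σ0 a T (.cg g) =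
      2 * ν' + 4 + #{s | a s ∧ g ∈ Gset σ0 s} + if .cg g ∈ T then 1 else 0 := by
  have hman : #{s | .cg g ∈ approvals σ0 a T (.man s)} = #{s | a s ∧ g ∈ Gset σ0 s} := by
    refine congrArg card (filter_congr fun s _ => ?_)
    by_cases ha : a s <;> simp [ha, approvals, Dset, Cset]
  have huij : ∑ g', #{j | .cg g ∈ approvals σ0 a T (.uij g' j)} = 2 * ν' + 4 := by
    simp [approvals, Fset, -Fintype.sum_sum_type, apply_ite, eq_comm]
  rw [approvalScore, card_filter_voter, hman, huij]
  by_cases h : Cand.cg g ∈ T <;> simp [h, approvals, Dcset, Eset] <;> omega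

lemma approvalScore_congr {T' : Finset (Cand ν' μ0)} {y : Cand ν' μ0} (h : y ∈ T ↔ y ∈ T') :
    approvalScore σ0 a T y = approvalScore σ0 a T' y :=
  congrArg card (filter_congr fun i _ => by cases i <;> simp [approvals, h])

def IsMain : Cand ν' μ0 → Prop
  | .w | .c | .p | .cg _ => True
  | _ => False

lemma forall_isMain_iff {q : Cand ν' μ0 → Prop} :
    (∀ y, IsMain y → q y) ↔ q .w ∧ q .c ∧ q .p ∧ ∀ g, q (.cg g) := by
  refine ⟨fun h => ⟨h _ trivial, h _ trivial, h _ trivial, fun g => h _ trivial⟩, ?_⟩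
  rintro ⟨hw, hc, hp, hg⟩ (_ | _ | _ | g | _ | _ | _ | _) hy
  exacts [hw, hc, hp, hg g, hy.elim, hy.elim, hy.elim, hy.elim]

lemma notMem_D0set_of_isMain {y : Cand ν' μ0} (hy : IsMain y) : y ∉ D0set ν' μ0 := by
  rcases y <;> simp_all [IsMain, D0set]

lemma FollowsBlocks.lt_p_of_isMain {v : LinearOrder (Cand ν' μ0)}
    {L : List (Finset (Cand ν' μ0))} (h : FollowsBlocks v (D0set ν' μ0 :: {.p} :: L))
    {y : Cand ν' μ0} (hy : IsMain y) (hyp : y ≠ .p) : v.lt y .p :=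
  h.lt_of_mem_append (L₁ := [_, _]) ⟨{.p}, by simp⟩
    (by simpa [hyp] using notMem_D0set_of_isMain hy)

def owner : Cand ν' μ0 → Voter ν' μ0
  | .d (some s) _ => .man s
  | .dc _ => .u
  | .e j _ => .uj j
  | .f g j _ => .uij g j
  | _ => .v0

lemma eq_v0_or_owner_of_mem_approvals {y : Cand ν' μ0} (hy : ¬ IsMain y) {i : Voter ν' μ0}
    (h : y ∈ approvals σ0 a T i) : i = .v0 ∨ i = owner y := by
  cases i with
  | man t =>
    by_cases ht : a t <;> rcases y with _ | _ | _ | g | ⟨_ | s, k⟩ | k | ⟨j, k⟩ | ⟨g, j, k⟩ <;>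
      simp_all [IsMain, owner, approvals, Dset, Cset]
  | _ =>
    rcases y with _ | _ | _ | g | ⟨_ | s, k⟩ | k | ⟨j, k⟩ | ⟨g, j, k⟩ <;>
      simp_all [IsMain, owner, approvals, Dcset, Eset, Fset]

lemma approvalScore_lt_approvalScore_w {y : Cand ν' μ0} (hy : ¬ IsMain y) :
    approvalScore σ0 a T y < approvalScore σ0 a T .w := by
  have : approvalScore σ0 a T y ≤ 2 :=
    calc approvalScore σ0 a T y ≤ #{.v0, owner y} :=
          card_le_card fun i hi => by
            simpa using eq_v0_or_owner_of_mem_approvals hy (mem_filter.1 hi).2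
      _ ≤ 2 := card_le_two
  rw [approvalScore_w]
  omega

end Game

section ExactCover

variable {σ0 : Fin μ0 → Finset (Fin (3 * ν'))}

/-- `a` chooses `ν = 2ν' + 3` sets covering every element of `Γ` exactly once. -/
def IsExactCover (σ0 : Fin μ0 → Finset (Fin (3 * ν'))) (a : SIdx ν' μ0 → Bool) : Prop :=
  #{s | a s} = 2 * ν' + 3 ∧ ∀ g, #{s | a s ∧ g ∈ Gset σ0 s} = 1

lemma card_filter_sIdx (P : SIdx ν' μ0 → Prop) [DecidablePred P] :
    #{s | P s} = #{j | P (.inl j)} + (if P (.inr (.inl ())) then 1 else 0) +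
      #{i | P (.inr (.inr (.inl i)))} + #{i | P (.inr (.inr (.inr i)))} := by
  simp only [card_filter, Fintype.sum_sum_type, Fintype.sum_unique, add_assoc]

/-- Choose the sets of `T`, `{g₁, g₂, g₃}` and the `S_i`, but none of the `S'_i`. -/
def coverActions (T : Finset (Fin μ0)) : SIdx ν' μ0 → Bool
  | .inl j => decide (j ∈ T)
  | .inr (.inl ()) => true
  | .inr (.inr (.inl _)) => true
  | .inr (.inr (.inr _)) => false

lemma isExactCover_coverActions (hσ0 : ∀ j, #(σ0 j) = 3) {T : Finset (Fin μ0)}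
    (hTcard : #T = ν') (hTcov : T.biUnion σ0 = univ) : IsExactCover σ0 (coverActions T) := by
  have hT := card_filter_mem_eq_one_of_biUnion_eq_univ hTcov (by simp [hσ0, hTcard, mul_comm])
  refine ⟨?_, fun g => ?_⟩
  · rw [card_filter_sIdx]
    simp [coverActions, hTcard]
    omega
  · rw [card_filter_sIdx]
    rcases g with t | γ | ⟨i, t⟩
    · fin_cases t <;> simp [coverActions, Gset, xel]
    · simpa [coverActions, Gset, xel, filter_and, filter_mem_eq_inter, inter_filter] using hT γ
    · fin_cases t <;> simp [coverActions, Gset, xel, filter_eq]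

variable {a : SIdx ν' μ0 → Bool} {T : Finset (Cand ν' μ0)}

lemma IsExactCover.approvalScore_c (ha : IsExactCover σ0 a) :
    approvalScore σ0 a T .c = 2 * ν' + 4 + if .c ∈ T then 1 else 0 := by
  rw [Paper.approvalScore_c, ha.1]; omega

lemma IsExactCover.approvalScore_cg (ha : IsExactCover σ0 a) (g : GElem ν') :
    approvalScore σ0 a T (.cg g) = 2 * ν' + 5 + if .cg g ∈ T then 1 else 0 := by
  rw [Paper.approvalScore_cg, ha.2]

end ExactCover

section Winners

variable {σ0 : Fin μ0 → Finset (Fin (3 * ν'))} {a : SIdx ν' μ0 → Bool} {T : Finset (Cand ν' μ0)}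
  {tb : LinearOrder (Cand ν' μ0)} {P : Voter ν' μ0 → LinearOrder (Cand ν' μ0)}

lemma isMain_winner (hP : sck 4 P = approvalScore σ0 a T) : IsMain (winner 4 tb P) := by
  by_contra h
  have := sck_le_sck_winner (k := 4) (tb := tb) P .w
  rw [hP] at this
  exact this.not_gt (approvalScore_lt_approvalScore_w h)

lemma winner_eq_of_isMain (hP : sck 4 P = approvalScore σ0 a T) {x : Cand ν' μ0}
    (hmax : ∀ y, IsMain y → approvalScore σ0 a T y ≤ approvalScore σ0 a T x)
    (htie : ∀ y, IsMain y → approvalScore σ0 a T y = approvalScore σ0 a T x → tb.le y x) :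
    winner 4 tb P = x := by
  have hdummy : ∀ y, ¬ IsMain y → approvalScore σ0 a T y < approvalScore σ0 a T x :=
    fun y hy => (approvalScore_lt_approvalScore_w hy).trans_le (hmax _ trivial)
  refine winner_eq_of (fun y => ?_) (fun y hy => ?_) <;> rw [hP] at *
  · by_cases hm : IsMain y
    exacts [hmax y hm, (hdummy y hm).le]
  · by_cases hm : IsMain y
    exacts [htie y hm hy, absurd hy (hdummy y hm).ne]

lemma winner_eq_winner_of_isMain_iff {Q : Voter ν' μ0 → LinearOrder (Cand ν' μ0)}
    {T' : Finset (Cand ν' μ0)} (hP : sck 4 P = approvalScore σ0 a T)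
    (hQ : sck 4 Q = approvalScore σ0 a T') (hTT' : ∀ y, IsMain y → (y ∈ T ↔ y ∈ T')) :
    winner 4 tb Q = winner 4 tb P := by
  refine winner_eq_of_sck_eqOn {y | IsMain y} (fun y hy => ?_) (fun y hy => ?_) (fun y hy => ?_)
  · rw [hP, hQ]; exact approvalScore_congr (hTT' y hy)
  · exact ⟨.w, trivial, hP ▸ approvalScore_lt_approvalScore_w hy⟩
  · exact ⟨.w, trivial, hQ ▸ approvalScore_lt_approvalScore_w hy⟩

lemma IsExactCover.winner_eq_p (ha : IsExactCover σ0 a) (hP : sck 4 P = approvalScore σ0 a T)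
    (htb : ∀ g, tb.lt (.cg g) .p) (hp : .p ∈ T) (hw : .w ∉ T) (hc : .c ∉ T)
    (hg : ∀ g, .cg g ∉ T) : winner 4 tb P = .p := by
  let _ := tb
  refine winner_eq_of_isMain hP (forall_isMain_iff.2 ?_) (forall_isMain_iff.2 ?_) <;>
    simp [approvalScore_w, approvalScore_p, ha.approvalScore_c, ha.approvalScore_cg,
      hp, hw, hc, hg, fun g => (htb g).le]

lemma IsExactCover.winner_eq_c (ha : IsExactCover σ0 a) (hP : sck 4 P = approvalScore σ0 a T)
    (htbp : tb.lt .p .c) (htbg : ∀ g, tb.lt (.cg g) .p) (hc : .c ∈ T) (hw : .w ∉ T)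
    (hg : ∀ g, .cg g ∉ T) : winner 4 tb P = .c := by
  let _ := tb
  refine winner_eq_of_isMain hP (forall_isMain_iff.2 ?_) (forall_isMain_iff.2 ?_) <;>
    by_cases hp : Cand.p ∈ T <;>
    simp [approvalScore_w, approvalScore_p, ha.approvalScore_c, ha.approvalScore_cg,
      hp, hw, hc, hg, htbp.le, fun g => ((htbg g).trans htbp).le]

lemma IsExactCover.winner_eq_c1 (ha : IsExactCover σ0 a) (hP : sck 4 P = approvalScore σ0 a T)
    (htb4 : ∀ t t' : Fin 3, t < t' → tb.lt (.cg (.inl t')) (.cg (.inl t)))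
    (htb5 : ∀ (t : Fin 3) g, tb.lt (.cg (.inr g)) (.cg (.inl t)))
    (hp : .p ∉ T) (hw : .w ∉ T) (hc : .c ∉ T) (hg : ∀ g, .cg g ∉ T) :
    winner 4 tb P = .cg (.inl 0) := by
  let _ := tb
  have htb : ∀ g, tb.le (.cg g) (.cg (.inl 0)) := by
    rintro (t | g)
    · rcases eq_or_ne t 0 with rfl | ht
      · exact le_rfl
      · exact (htb4 0 t (Fin.pos_of_ne_zero ht)).le
    · exact (htb5 0 g).le
  refine winner_eq_of_isMain hP (forall_isMain_iff.2 ?_) (forall_isMain_iff.2 ?_) <;>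
    simp [approvalScore_w, approvalScore_p, ha.approvalScore_c, ha.approvalScore_cg,
      hp, hw, hc, hg, htb]

lemma IsExactCover.mem_of_winner_eq_p (ha : IsExactCover σ0 a)
    (hP : sck 4 P = approvalScore σ0 a T) (htbc : tb.lt .p .c) (htbw : tb.lt .c .w)
    (hwin : winner 4 tb P = .p) : .p ∈ T ∧ .w ∉ T ∧ .c ∉ T ∧ ∀ g, .cg g ∉ T := by
  let _ := tb
  have hle : ∀ y, approvalScore σ0 a T y ≤ approvalScore σ0 a T .p := fun y => by
    rw [← hP, ← hwin]; exact sck_le_sck_winner P y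
  have hlt : ∀ y, tb.lt .p y → approvalScore σ0 a T y < approvalScore σ0 a T .p := fun y h => by
    rw [← hP, ← hwin]; exact sck_lt_sck_winner_of_lt (hwin ▸ h)
  have hg := fun g => hle (.cg g)
  have hw := hlt _ (htbc.trans htbw)
  have hc := hlt _ htbc
  simp only [approvalScore_w, approvalScore_p, ha.approvalScore_c, ha.approvalScore_cg]
    at hg hw hc
  have hp : .p ∈ T := by
    by_contra h
    have := hg (.inl 0)
    rw [if_neg h] at this
    omega
  rw [if_pos hp] at hg hw hc
  refine ⟨hp, fun h => ?_, fun h => ?_, fun g h => ?_⟩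
  · rw [if_pos h] at hw; omega
  · rw [if_pos h] at hc; omega
  · have := hg g; rw [if_pos h] at this; omega

end Winners

theorem statement_13_general
    (ν' μ0 : ℕ)
    (σ0 : Fin μ0 → Finset (Fin (3 * ν')))
    (hσ0 : ∀ j, (σ0 j).card = 3)
    (tb : LinearOrder (Cand ν' μ0))
    (htb1 : tb.lt Cand.c Cand.w)
    (htb2 : tb.lt Cand.p Cand.c)
    (htb3 : ∀ g, tb.lt (Cand.cg g) Cand.p)
    (htb4 : ∀ t t' : Fin 3, t < t' → tb.lt (Cand.cg (Sum.inl t')) (Cand.cg (Sum.inl t)))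
    (htb5 : ∀ (t : Fin 3) (g : Fin (3 * ν') ⊕ (Fin (ν' + 2) × Fin 3)),
      tb.lt (Cand.cg (Sum.inr g)) (Cand.cg (Sum.inl t)))
    (V : Voter ν' μ0 → LinearOrder (Cand ν' μ0))
    (hz0 : FollowsBlocks (V Voter.v0)
      [D0set ν' μ0, {Cand.p}, {Cand.cg (Sum.inl 0)}, {Cand.c},
       Cpset ν' μ0 \ {Cand.cg (Sum.inl 0)},
       Finset.univ \ (D0set ν' μ0 ∪ Cpset ν' μ0 ∪ {Cand.p, Cand.c})])
    (hzman : ∀ s, FollowsBlocks (V (Voter.man s))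
      [Dset ν' μ0 s, Cset ν' μ0 σ0 s, {Cand.c},
       Finset.univ \ (Dset ν' μ0 s ∪ Cset ν' μ0 σ0 s ∪ {Cand.c})])
    (hu : FollowsBlocks (V Voter.u)
      [{Cand.c}, Dcset ν' μ0, {Cand.w},
       Finset.univ \ (Dcset ν' μ0 ∪ {Cand.c, Cand.w})])
    (huj : ∀ j, FollowsBlocks (V (Voter.uj j))
      [{Cand.w}, {Cand.p}, Eset ν' μ0 j,
       Finset.univ \ (Eset ν' μ0 j ∪ {Cand.w, Cand.p})])
    (huij : ∀ g j, FollowsBlocks (V (Voter.uij g j))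
      [{Cand.cg g}, Fset ν' μ0 g j, {Cand.w},
       Finset.univ \ (Fset ν' μ0 g j ∪ {Cand.cg g, Cand.w})])
    (zp : SIdx ν' μ0 → LinearOrder (Cand ν' μ0))
    (hzp : ∀ s, topk 4 (zp s) = Cset ν' μ0 σ0 s ∪ {Cand.c})
    (dd dd' : Fin 4)
    (z0' z0'' : LinearOrder (Cand ν' μ0))
    (hz0' : topk 4 z0' = (D0set ν' μ0 \ {Cand.d none dd, Cand.d none dd'}) ∪ {Cand.p, Cand.c})
    (hz0'' : topk 4 z0'' = (D0set ν' μ0 \ {Cand.d none dd}) ∪ {Cand.p})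
    (hcover : ∃ T : Finset (Fin μ0), T.card = ν' ∧ T.biUnion σ0 = Finset.univ)
    :
    (∀ s : LinearOrder (Cand ν' μ0), ¬ WD tb V zp s z0'') ∧
    ¬ WD tb V zp z0' (V Voter.v0) := by
  obtain ⟨T, hTcard, hTcov⟩ := hcover
  have hsck := sck_play hzman hu huj huij hzp
  obtain ⟨a, ha⟩ : ∃ a, IsExactCover σ0 a := ⟨_, isExactCover_coverActions hσ0 hTcard hTcov⟩
  have hwin'' : winner 4 tb (play V zp z0'' a) = .p :=
    ha.winner_eq_p (hsck _ _) htb3 (by simp [hz0'']) (by simp [hz0'', D0set])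
      (by simp [hz0'', D0set]) (by simp [hz0'', D0set])
  refine ⟨fun s hWD => ?_, fun hWD => ?_⟩
  · have hwin : winner 4 tb (play V zp s a) = .p := by
      rcases hWD.1 a with h | h
      · rwa [hwin''] at h
      · rw [hwin''] at h
        by_contra hne
        exact @lt_asymm _ (V .v0).toPreorder _ _ h
          (hz0.lt_p_of_isMain (isMain_winner (hsck s a)) hne)
    obtain ⟨hp, hw, hc, hg⟩ := ha.mem_of_winner_eq_p (hsck s a) htb2 htb1 hwin
    obtain ⟨a', ha'⟩ := hWD.2
    rw [winner_eq_winner_of_isMain_iff (hsck z0'' a') (hsck s a')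
      (forall_isMain_iff.2 (by simp [hz0'', D0set, hp, hw, hc, hg]))] at ha'
    exact @lt_irrefl _ (V .v0).toPreorder _ ha'
  · have ht0 : topk 4 (V .v0) = D0set ν' μ0 :=
      topk_eq_of_followsBlocks_append (L₁ := [_]) hz0 (by simp) card_D0set
    have hwin' : winner 4 tb (play V zp z0' a) = .c :=
      ha.winner_eq_c (hsck _ _) htb2 htb3 (by simp [hz0']) (by simp [hz0', D0set])
        (by simp [hz0', D0set])
    have hwin0 : winner 4 tb (play V zp (V .v0) a) = .cg (.inl 0) :=
      ha.winner_eq_c1 (hsck _ _) htb4 htb5 (by simp [ht0, D0set]) (by simp [ht0, D0set])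
        (by simp [ht0, D0set]) (by simp [ht0, D0set])
    rcases hWD.1 a with h | h <;> rw [hwin', hwin0] at h
    · cases h
    · exact @lt_asymm _ (V .v0).toPreorder _ _ h
        (hz0.lt_of_mem_append (L₁ := [_, _, _]) ⟨{.cg (.inl 0)}, by simp⟩ (by simp [D0set]))

/-- if the original X3C instance has an exact cover, then in the
constructed GS-game `z''_0` is a level-2 strategy of voter 0, and `z'_0` is not an
improving strategy. -/
theorem statement_13
    (ν' μ0 : ℕ)
    (σ0 : Fin μ0 → Finset (Fin (3 * ν')))
    (hσ0 : ∀ j, (σ0 j).card = 3)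
    (tb : LinearOrder (Cand ν' μ0))
    (htb1 : tb.lt Cand.c Cand.w)
    (htb2 : tb.lt Cand.p Cand.c)
    (htb3 : ∀ g, tb.lt (Cand.cg g) Cand.p)
    (htb4 : ∀ t t' : Fin 3, t < t' → tb.lt (Cand.cg (Sum.inl t')) (Cand.cg (Sum.inl t)))
    (htb5 : ∀ (t : Fin 3) (g : Fin (3 * ν') ⊕ (Fin (ν' + 2) × Fin 3)),
      tb.lt (Cand.cg (Sum.inr g)) (Cand.cg (Sum.inl t)))
    (htb6 : ∀ x : Cand ν' μ0, x ∉ ({Cand.w, Cand.c, Cand.p} ∪ Cpset ν' μ0) →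
      ∀ g, tb.lt x (Cand.cg g))
    (V : Voter ν' μ0 → LinearOrder (Cand ν' μ0))
    (hz0 : FollowsBlocks (V Voter.v0)
      [D0set ν' μ0, {Cand.p}, {Cand.cg (Sum.inl 0)}, {Cand.c},
       Cpset ν' μ0 \ {Cand.cg (Sum.inl 0)},
       Finset.univ \ (D0set ν' μ0 ∪ Cpset ν' μ0 ∪ {Cand.p, Cand.c})])
    (hzman : ∀ s, FollowsBlocks (V (Voter.man s))
      [Dset ν' μ0 s, Cset ν' μ0 σ0 s, {Cand.c},
       Finset.univ \ (Dset ν' μ0 s ∪ Cset ν' μ0 σ0 s ∪ {Cand.c})])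
    (hcons : ∀ s, ∀ a ∈ Cset ν' μ0 σ0 s, ∀ b ∈ Cset ν' μ0 σ0 s,
      tb.lt a b → (V (Voter.man s)).lt a b)
    (hu : FollowsBlocks (V Voter.u)
      [{Cand.c}, Dcset ν' μ0, {Cand.w},
       Finset.univ \ (Dcset ν' μ0 ∪ {Cand.c, Cand.w})])
    (huj : ∀ j, FollowsBlocks (V (Voter.uj j))
      [{Cand.w}, {Cand.p}, Eset ν' μ0 j,
       Finset.univ \ (Eset ν' μ0 j ∪ {Cand.w, Cand.p})])
    (huij : ∀ g j, FollowsBlocks (V (Voter.uij g j))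
      [{Cand.cg g}, Fset ν' μ0 g j, {Cand.w},
       Finset.univ \ (Fset ν' μ0 g j ∪ {Cand.cg g, Cand.w})])
    (zp : SIdx ν' μ0 → LinearOrder (Cand ν' μ0))
    (hzp : ∀ s, topk 4 (zp s) = Cset ν' μ0 σ0 s ∪ {Cand.c})
    (dd dd' : Fin 4) (hdd : dd ≠ dd')
    (z0' z0'' : LinearOrder (Cand ν' μ0))
    (hz0' : topk 4 z0' = (D0set ν' μ0 \ {Cand.d none dd, Cand.d none dd'}) ∪ {Cand.p, Cand.c})
    (hz0'' : topk 4 z0'' = (D0set ν' μ0 \ {Cand.d none dd}) ∪ {Cand.p})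
    (hcover : ∃ T : Finset (Fin μ0), T.card = ν' ∧ T.biUnion σ0 = Finset.univ)
    :
    (∀ s : LinearOrder (Cand ν' μ0), ¬ WD tb V zp s z0'') ∧
    ¬ WD tb V zp z0' (V Voter.v0) :=
  statement_13_general ν' μ0 σ0 hσ0 tb htb1 htb2 htb3 htb4 htb5 V hz0 hzman hu huj huij zp hzp dd
    dd' z0' z0'' hz0' hz0'' hcover

end Paper
end
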